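/- Let (l_j)_{j≥1} be a nonincreasing infinite sequence of positive real numbers with ∑_{j=1}^∞ l_j < ∞, let V_L(ε) = ∑_{j : l_j ≥ 2ε} 2ε + ∑_{j : l_j < 2ε} l_j, and let N(x) = #{ j : l_j ≥ 1/x }. Define σ = inf{ α ∈ ℝ : ∑_j l_j^α < ∞ }, D_M = inf{ α ≥ 0 : V_L(ε) = O(ε^{1−α}) as ε → 0⁺ }, and D = inf{ α ≥ 0 : N(x) = O(x^α) as x → ∞ }. Then 0 ≤ σ ≤ 1 and D_M = σ = D. -/

import Mathlib

/-! Writing the tube volume as `V(ε) = ∑ j, min (2ε) (l j)` and using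
`min a b ≤ a ^ (1 - β) * b ^ β`, a convergent `∑ l_j ^ β` with `β ≤ 1` gives
`V(ε) = O(ε ^ (1 - β))`, so `D_M ≤ σ`. Since `V(ε) ≥ 2ε · N(1 / (2ε))`, such a tube bound gives
`N(x) = O(x ^ β)`, so `D ≤ D_M`. Finally `N(1 / l_n) ≥ n + 1` because `l` is nonincreasing, so
`N(x) = O(x ^ α)` forces `(n + 1) · l_n ^ α = O(1)`, and `∑ l_n ^ β` converges for every `β > α`
by comparison with a `p`-series; hence `σ ≤ D`. -/

open Real Filter Topology

theorem csInf_le_csInf_of_forall_lt_exists_le {α : Type*} [ConditionallyCompleteLinearOrder α]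
    [DenselyOrdered α] {s t : Set α} (ht : BddBelow t) (hs : s.Nonempty)
    (h : ∀ a ∈ s, ∀ b > a, ∃ c ∈ t, c ≤ b) : sInf t ≤ sInf s :=
  le_csInf hs fun a ha => le_of_forall_gt_imp_ge_of_dense fun b hab =>
    let ⟨_, hc, hcb⟩ := h a ha b hab
    (csInf_le ht hc).trans hcb

theorem Real.min_le_rpow_mul_rpow {a b t : ℝ} (ha : 0 ≤ a) (hb : 0 ≤ b) (ht₀ : 0 ≤ t)
    (ht₁ : t ≤ 1) : min a b ≤ a ^ (1 - t) * b ^ t :=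
  calc min a b = min a b ^ (1 - t) * min a b ^ t := by
        rw [← rpow_add' (le_min ha hb) (by norm_num), sub_add_cancel, rpow_one]
    _ ≤ a ^ (1 - t) * b ^ t := by
        gcongr
        exacts [min_le_left a b, min_le_right a b]

theorem summable_rpow_of_eventually_mul_rpow_le {a : ℕ → ℝ} (ha : ∀ n, 0 ≤ a n) {α β C : ℝ}
    (hα : 0 < α) (hαβ : α < β) (h : ∀ᶠ n : ℕ in atTop, ((n : ℝ) + 1) * a n ^ α ≤ C) :
    Summable fun n => a n ^ β := by
  set p := β / α
  have hp : 1 < p := (one_lt_div hα).2 hαβ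
  have hseries : Summable fun n : ℕ => C ^ p * (((n : ℝ) + 1) ^ p)⁻¹ := by
    have := (summable_nat_add_iff 1).2 (summable_nat_rpow_inv.2 hp)
    push_cast at this
    exact this.mul_left _
  refine hseries.of_norm_bounded_eventually_nat ?_
  filter_upwards [h] with n hn
  have hn₁ : (0 : ℝ) < n + 1 := by positivity
  have hC : 0 ≤ C := le_trans (by have := ha n; positivity) hn
  rw [norm_of_nonneg (rpow_nonneg (ha n) _)]
  calc a n ^ β = (a n ^ α) ^ p := by rw [← rpow_mul (ha n), mul_div_cancel₀ _ hα.ne']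
    _ ≤ (C / ((n : ℝ) + 1)) ^ p := by
        gcongr
        · exact rpow_nonneg (ha n) _
        · rw [le_div_iff₀ hn₁]
          linarith
    _ = C ^ p * (((n : ℝ) + 1) ^ p)⁻¹ := by rw [div_rpow hC hn₁.le, div_eq_mul_inv]

section

variable {l : ℕ → ℝ}

theorem Summable.finite_setOf_le (hsum : Summable l) {c : ℝ} (hc : 0 < c) :
    {j | c ≤ l j}.Finite := by
  simpa using hsum.tendsto_cofinite_zero.eventually_lt_const hc

theorem Antitone.succ_le_card_setOf_le (hmono : Antitone l) (hsum : Summable l) {n : ℕ}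
    (hn : 0 < l n) : n + 1 ≤ Nat.card {j | l n ≤ l j} := by
  rw [Nat.card_eq_card_finite_toFinset (hsum.finite_setOf_le hn)]
  simpa using Finset.card_le_card (s := Finset.range (n + 1)) fun j hj => by
    simpa using hmono (Nat.lt_succ_iff.1 (Finset.mem_range.1 hj))

theorem summable_rpow_of_le (hpos : ∀ j, 0 < l j) (hl : Tendsto l atTop (𝓝 0)) {α β : ℝ}
    (hαβ : α ≤ β) (hα : Summable fun j => l j ^ α) : Summable fun j => l j ^ β := by
  refine hα.of_norm_bounded_eventually_nat ?_
  filter_upwards [hl.eventually_le_const one_pos] with j hj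
  rw [norm_of_nonneg (rpow_nonneg (hpos j).le _)]
  exact rpow_le_rpow_of_exponent_ge (hpos j) hj hαβ

theorem pos_of_summable_rpow (hpos : ∀ j, 0 < l j) (hl : Tendsto l atTop (𝓝 0)) {α : ℝ}
    (hα : Summable fun j => l j ^ α) : 0 < α := by
  by_contra! h
  obtain ⟨j, hj₁, hjα⟩ := ((hl.eventually_le_const one_pos).and
    (hα.tendsto_atTop_zero.eventually_lt_const one_pos)).exists
  exact (one_le_rpow_of_pos_of_le_one_of_nonpos (hpos j) hj₁ h).not_gt hjα

theorem summable_rpow_of_card_le (hpos : ∀ j, 0 < l j) (hmono : Antitone l) (hsum : Summable l)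
    {α β C x₀ : ℝ} (hα : 0 ≤ α) (hαβ : α < β) (hx₀ : 0 < x₀)
    (hN : ∀ x, x₀ < x → (Nat.card {j | 1 / x ≤ l j} : ℝ) ≤ C * x ^ α) :
    Summable fun j => l j ^ β := by
  have hbound : ∀ᶠ n : ℕ in atTop, ((n : ℝ) + 1) * l n ^ α ≤ C := by
    filter_upwards [hsum.tendsto_atTop_zero.eventually_lt_const (inv_pos.2 hx₀)] with n hn
    have hcard : (n : ℝ) + 1 ≤ Nat.card {j | l n ≤ l j} := by
      exact_mod_cast hmono.succ_le_card_setOf_le hsum (hpos n)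
    have hNn := hN _ ((lt_inv_comm₀ (hpos n) hx₀).1 hn)
    rw [one_div, inv_inv, inv_rpow (hpos n).le, ← div_eq_mul_inv] at hNn
    rw [← le_div_iff₀ (rpow_pos_of_pos (hpos n) _)]
    exact hcard.trans hNn
  rcases hα.eq_or_lt with rfl | hα
  · obtain ⟨n, hn, hnC⟩ :=
      (hbound.and (tendsto_natCast_atTop_atTop.eventually_gt_atTop C)).exists
    simp only [rpow_zero, mul_one] at hn
    linarith
  · exact summable_rpow_of_eventually_mul_rpow_le (fun j => (hpos j).le) hα hαβ hbound

noncomputable def innerTubeVolume (l : ℕ → ℝ) (ε : ℝ) : ℝ :=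
  2 * ε * (Nat.card {j : ℕ | 2 * ε ≤ l j} : ℝ) + ∑' j : {j : ℕ // l j < 2 * ε}, l j.1

theorem two_mul_card_le_innerTubeVolume (hpos : ∀ j, 0 < l j) (ε : ℝ) :
    2 * ε * (Nat.card {j | 2 * ε ≤ l j} : ℝ) ≤ innerTubeVolume l ε :=
  le_add_of_nonneg_right (tsum_nonneg fun j => (hpos j.1).le)

theorem Summable.min_const_left (hsum : Summable l) (hpos : ∀ j, 0 < l j) {c : ℝ} (hc : 0 ≤ c) :
    Summable fun j => min c (l j) :=
  hsum.of_nonneg_of_le (fun j => le_min hc (hpos j).le) fun _ => min_le_right _ _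

theorem innerTubeVolume_eq_tsum_min (hpos : ∀ j, 0 < l j) (hsum : Summable l) {ε : ℝ}
    (hε : 0 < ε) : innerTubeVolume l ε = ∑' j, min (2 * ε) (l j) := by
  set s := {j | 2 * ε ≤ l j}
  have hmin := hsum.min_const_left hpos (by positivity : 0 ≤ 2 * ε)
  rw [← Summable.tsum_add_tsum_compl (s := s) (hmin.subtype _) (hmin.subtype _)]
  have := (hsum.finite_setOf_le (by positivity : 0 < 2 * ε)).fintype
  unfold innerTubeVolume
  congr 1
  · rw [tsum_fintype, Finset.sum_congr rfl fun j _ => min_eq_left j.2, Finset.sum_const,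
      Finset.card_univ, ← Nat.card_eq_fintype_card, nsmul_eq_mul, mul_comm]
  · rw [← (Equiv.subtypeEquivRight fun j => (not_le : ¬2 * ε ≤ l j ↔ _)).tsum_eq]
    exact tsum_congr fun j => (min_eq_right (not_le.1 j.2).le).symm

theorem innerTubeVolume_le (hpos : ∀ j, 0 < l j) (hsum : Summable l) {β ε : ℝ} (hβ₀ : 0 ≤ β)
    (hβ₁ : β ≤ 1) (hβ : Summable fun j => l j ^ β) (hε : 0 < ε) :
    innerTubeVolume l ε ≤ 2 ^ (1 - β) * (∑' j, l j ^ β) * ε ^ (1 - β) := by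
  have hmin := hsum.min_const_left hpos (by positivity : 0 ≤ 2 * ε)
  rw [innerTubeVolume_eq_tsum_min hpos hsum hε, mul_right_comm, ← mul_rpow two_pos.le hε.le,
    ← tsum_mul_left]
  exact hmin.tsum_le_tsum (fun j => min_le_rpow_mul_rpow (by positivity) (hpos j).le hβ₀ hβ₁)
    (hβ.mul_left _)

theorem card_le_of_innerTubeVolume_le (hpos : ∀ j, 0 < l j) {α C ε₀ : ℝ} (hε₀ : 0 < ε₀)
    (hV : ∀ ε, 0 < ε → ε < ε₀ → innerTubeVolume l ε ≤ C * ε ^ (1 - α)) {x : ℝ}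
    (hx : 1 / (2 * ε₀) < x) : (Nat.card {j | 1 / x ≤ l j} : ℝ) ≤ C * 2 ^ α / 2 * x ^ α := by
  have hx₀ : 0 < x := lt_trans (by positivity) hx
  have hε : 0 < (2 * x)⁻¹ := by positivity
  have hεε₀ : (2 * x)⁻¹ < ε₀ := by
    rw [inv_lt_comm₀ (by positivity) hε₀]
    rw [one_div, mul_inv] at hx
    linarith
  have h2ε : 2 * (2 * x)⁻¹ = 1 / x := by field_simp
  have hpow : (2 * x)⁻¹ ^ (1 - α) = 2 ^ α * x ^ α / (2 * x) := by
    rw [inv_rpow (by positivity), rpow_sub (by positivity), rpow_one,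
      mul_rpow zero_le_two hx₀.le, inv_div]
  have key := (two_mul_card_le_innerTubeVolume hpos _).trans (hV _ hε hεε₀)
  rw [h2ε, hpow] at key
  calc (Nat.card {j | 1 / x ≤ l j} : ℝ) = x * (1 / x * Nat.card {j | 1 / x ≤ l j}) := by
        field_simp
    _ ≤ x * (C * (2 ^ α * x ^ α / (2 * x))) := by gcongr
    _ = C * 2 ^ α / 2 * x ^ α := by field_simp

end

def convergenceExponents (l : ℕ → ℝ) : Set ℝ :=
  {α | Summable fun j => l j ^ α}

def minkowskiExponents (V : ℝ → ℝ) : Set ℝ :=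
  {α | 0 ≤ α ∧ ∃ C > (0 : ℝ), ∃ ε₀ > (0 : ℝ), ∀ ε : ℝ, 0 < ε → ε < ε₀ → V ε ≤ C * ε ^ (1 - α)}

def growthExponents (N : ℝ → ℝ) : Set ℝ :=
  {α | 0 ≤ α ∧ ∃ C > (0 : ℝ), ∃ x₀ > (0 : ℝ), ∀ x : ℝ, x₀ < x → N x ≤ C * x ^ α}

section

variable {l : ℕ → ℝ} {V N : ℝ → ℝ}

theorem mem_minkowskiExponents (hpos : ∀ j, 0 < l j) (hsum : Summable l)
    (hV : ∀ ε, 0 < ε → V ε = innerTubeVolume l ε) {β : ℝ} (hβ : β ∈ convergenceExponents l)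
    (hβ₁ : β ≤ 1) : β ∈ minkowskiExponents V := by
  have hβ₀ := (pos_of_summable_rpow hpos hsum.tendsto_atTop_zero hβ).le
  have hT : 0 < ∑' j, l j ^ β :=
    hβ.tsum_pos (fun j => rpow_nonneg (hpos j).le _) 0 (rpow_pos_of_pos (hpos 0) _)
  refine ⟨hβ₀, 2 ^ (1 - β) * ∑' j, l j ^ β, by positivity, 1, one_pos, fun ε hε _ => ?_⟩
  rw [hV ε hε]
  exact innerTubeVolume_le hpos hsum hβ₀ hβ₁ hβ hε

theorem minkowskiExponents_subset_growthExponents (hpos : ∀ j, 0 < l j)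
    (hV : ∀ ε, 0 < ε → V ε = innerTubeVolume l ε)
    (hN : ∀ x, 0 < x → N x = Nat.card {j | 1 / x ≤ l j}) :
    minkowskiExponents V ⊆ growthExponents N := by
  rintro α ⟨hα, C, hC, ε₀, hε₀, hb⟩
  refine ⟨hα, C * 2 ^ α / 2, by positivity, 1 / (2 * ε₀), by positivity, fun x hx => ?_⟩
  rw [hN x (lt_trans (by positivity) hx)]
  exact card_le_of_innerTubeVolume_le hpos hε₀ (fun ε hε hεε₀ => hV ε hε ▸ hb ε hε hεε₀) hx

theorem mem_convergenceExponents_of_mem_growthExponents (hpos : ∀ j, 0 < l j)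
    (hmono : Antitone l) (hsum : Summable l) (hN : ∀ x, 0 < x → N x = Nat.card {j | 1 / x ≤ l j})
    {α β : ℝ} (hα : α ∈ growthExponents N) (hαβ : α < β) : β ∈ convergenceExponents l := by
  obtain ⟨hα₀, C, -, x₀, hx₀, hb⟩ := hα
  exact summable_rpow_of_card_le hpos hmono hsum hα₀ hαβ hx₀ fun x hx =>
    hN x (hx₀.trans hx) ▸ hb x hx

end

/-- For a real fractal string with infinitely many lengths `(l_j)`
(nonincreasing, positive, summable), inner tube volume
`V_L(ε) = ∑_{l_j ≥ 2ε} 2ε + ∑_{l_j < 2ε} l_j`, counting function `N(x) = #{j : l_j ≥ 1/x}`,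
abscissa of convergence `σ`, Minkowski dimension `D_M` and growth rate `D`, one has
`0 ≤ σ ≤ 1` and `D_M = σ = D`. -/
theorem real_string_minkowski_eq_abscissa_eq_growth (l : ℕ → ℝ) (hpos : ∀ j, 0 < l j)
    (hmono : Antitone l) (hsum : Summable l)
    (V : ℝ → ℝ)
    (hV : ∀ ε : ℝ, 0 < ε →
      V ε = 2 * ε * (Nat.card {j : ℕ | 2 * ε ≤ l j} : ℝ)
        + ∑' j : {j : ℕ // l j < 2 * ε}, l j.1)
    (N : ℝ → ℝ) (hN : ∀ x : ℝ, 0 < x → N x = Nat.card {j : ℕ | 1 / x ≤ l j})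
    (σ DM D : ℝ)
    (hσ : σ = sInf {α : ℝ | Summable fun j => l j ^ α})
    (hDM : DM = sInf {α : ℝ | 0 ≤ α ∧
        ∃ C > (0 : ℝ), ∃ ε₀ > (0 : ℝ), ∀ ε : ℝ, 0 < ε → ε < ε₀ → V ε ≤ C * ε ^ (1 - α)})
    (hD : D = sInf {α : ℝ | 0 ≤ α ∧
        ∃ C > (0 : ℝ), ∃ x₀ > (0 : ℝ), ∀ x : ℝ, x₀ < x → N x ≤ C * x ^ α}) :
    0 ≤ σ ∧ σ ≤ 1 ∧ DM = σ ∧ σ = D := by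
  change σ = sInf (convergenceExponents l) at hσ
  change DM = sInf (minkowskiExponents V) at hDM
  change D = sInf (growthExponents N) at hD
  subst hσ hDM hD
  have hl := hsum.tendsto_atTop_zero
  have hone : (1 : ℝ) ∈ convergenceExponents l := by simpa [convergenceExponents] using hsum
  have hσ₀ : ∀ α ∈ convergenceExponents l, 0 ≤ α :=
    fun α hα => (pos_of_summable_rpow hpos hl hα).le
  have hmink : ∀ β ∈ convergenceExponents l, β ≤ 1 → β ∈ minkowskiExponents V :=
    fun β => mem_minkowskiExponents hpos hsum hV
  have hsub := minkowskiExponents_subset_growthExponents hpos hV hN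
  have hσD : sInf (convergenceExponents l) ≤ sInf (growthExponents N) :=
    csInf_le_csInf_of_forall_lt_exists_le ⟨0, hσ₀⟩ ⟨1, hsub (hmink 1 hone le_rfl)⟩
      fun α hα β hαβ =>
        ⟨β, mem_convergenceExponents_of_mem_growthExponents hpos hmono hsum hN hα hαβ, le_rfl⟩
  have hDDM : sInf (growthExponents N) ≤ sInf (minkowskiExponents V) :=
    csInf_le_csInf ⟨0, fun α hα => hα.1⟩ ⟨1, hmink 1 hone le_rfl⟩ hsub
  have hDMσ : sInf (minkowskiExponents V) ≤ sInf (convergenceExponents l) := by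
    refine csInf_le_csInf_of_forall_lt_exists_le ⟨0, fun α hα => hα.1⟩ ⟨1, hone⟩
      fun α hα β hαβ => ?_
    rcases le_or_gt β 1 with hβ₁ | hβ₁
    · exact ⟨β, hmink β (summable_rpow_of_le hpos hl hαβ.le hα) hβ₁, le_rfl⟩
    · exact ⟨1, hmink 1 hone le_rfl, hβ₁.le⟩
  exact ⟨le_csInf ⟨1, hone⟩ hσ₀, csInf_le ⟨0, hσ₀⟩ hone, le_antisymm hDMσ (hσD.trans hDDM),
    le_antisymm hσD (hDDM.trans hDMσ)⟩
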